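/- Let R be an A-simulation between iCGS G and G' with q R q'. For every uniform strategy σ_A for coalition A in G, there exists a uniform strategy σ'_A in G' such that for every run λ' in the subjective outcome set out^{G'}_subj(q', σ'_A), there exists a run λ in out^G_subj(q, σ_A) with λ[i] R λ'[i] for all i ≥ 0. -/

import Mathlib

/-- An imperfect-information concurrent game structure (iCGS), given as raw data;
the defining axioms are collected in `iCGS.Valid`. -/
structure iCGS (Ag AP S Act : Type) where
  init : S
  indist : Ag → S → S → Prop
  protocol : Ag → S → Set Act
  trans : S → (Ag → Act) → S → Prop
  label : S → Set AP

namespace iCGS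

variable {Ag AP S S' Act Act' : Type}

/-- The axioms of an iCGS. -/
def Valid (G : iCGS Ag AP S Act) : Prop :=
  (∀ i, Equivalence (G.indist i)) ∧
  (∀ i s, (G.protocol i s).Nonempty) ∧
  (∀ i s s', G.indist i s s' → G.protocol i s = G.protocol i s') ∧
  (∀ s a, (∃ s', G.trans s a s') ↔ ∀ i, a i ∈ G.protocol i s)

/-- Common-knowledge reachability for coalition `A`:
reflexive-transitive closure of the union of the `∼ᵢ`, `i ∈ A`. -/
def ck (G : iCGS Ag AP S Act) (A : Set Ag) : S → S → Prop :=
  Relation.ReflTransGen (fun s s' => ∃ i ∈ A, G.indist i s s')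

/-- Common-knowledge neighbourhood `C_A(q)`. -/
def CKN (G : iCGS Ag AP S Act) (A : Set Ag) (q : S) : Set S := {r | G.ck A q r}

/-- "Everybody knows" neighbourhood `E_A(q)`. -/
def EKN (G : iCGS Ag AP S Act) (A : Set Ag) (q : S) : Set S :=
  {r | ∃ i ∈ A, G.indist i q r}

/-- `σ` is a partial uniform strategy for coalition `A` with domain `Q`. -/
def IsPStrat (G : iCGS Ag AP S Act) (A : Set Ag) (Q : Set S) (σ : Ag → S → Act) : Prop :=
  (∀ i ∈ A, ∀ s ∈ Q, σ i s ∈ G.protocol i s) ∧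
  (∀ i ∈ A, ∀ s ∈ Q, ∀ t ∈ Q, G.indist i s t → σ i s = σ i t)

/-- `σ` is a (total) uniform memoryless strategy for coalition `A`. -/
def IsStrat (G : iCGS Ag AP S Act) (A : Set Ag) (σ : Ag → S → Act) : Prop :=
  G.IsPStrat A Set.univ σ

/-- Successors of `s` under joint actions compatible with `σ` on coalition `A`. -/
def succ (G : iCGS Ag AP S Act) (A : Set Ag) (σ : Ag → S → Act) (s : S) : Set S :=
  {t | ∃ a : Ag → Act, (∀ i ∈ A, a i = σ i s) ∧ G.trans s a t}

/-- Objective outcome set of strategy `σ` at `q` (runs as infinite state sequences). -/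
def OutObj (G : iCGS Ag AP S Act) (A : Set Ag) (σ : Ag → S → Act) (q : S) :
    Set (ℕ → S) :=
  {lam | lam 0 = q ∧ ∀ j, lam (j + 1) ∈ G.succ A σ (lam j)}

/-- Subjective outcome set: union of objective outcomes over states indistinguishable
from `q` for some member of the coalition. -/
def OutSubj (G : iCGS Ag AP S Act) (A : Set Ag) (σ : Ag → S → Act) (q : S) :
    Set (ℕ → S) :=
  {lam | ∃ i ∈ A, ∃ r, G.indist i q r ∧ lam ∈ G.OutObj A σ r}

/-- Outcome set: subjective (`x = true`) or objective (`x = false`).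
(For a nonempty coalition the subjective case coincides with the union of
objective outcomes over indistinguishable states, by reflexivity; for the
empty coalition it degenerates to the objective case.) -/
def Out (G : iCGS Ag AP S Act) (x : Bool) (A : Set Ag) (σ : Ag → S → Act) (q : S) :
    Set (ℕ → S) :=
  if x then G.OutObj A σ q ∪ G.OutSubj A σ q else G.OutObj A σ q

/-- `R` is a simulation for coalition `A` from `G` to `G'` (Def. of simulation):
existence of a strategy simulator over common-knowledge neighbourhoods with
(a) atom agreement, (b) epistemic back-condition, (c) strategy transfer, and
(2) injectivity modulo common-knowledge neighbourhoods. -/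
def IsSimulation (G : iCGS Ag AP S Act) (G' : iCGS Ag AP S' Act') (A : Set Ag)
    (R : S → S' → Prop) : Prop :=
  (∃ ST : Set S → Set S' → (Ag → S → Act) → (Ag → S' → Act'),
    ∀ q q', R q q' →
      (∀ σ, G.IsPStrat A (G.CKN A q) σ →
        G'.IsPStrat A (G'.CKN A q') (ST (G.CKN A q) (G'.CKN A q') σ)) ∧
      (∀ r ∈ G.CKN A q, ∀ r' ∈ G'.CKN A q', R r r' →
        ∀ σ, G.IsPStrat A (G.CKN A q) σ →
          ∀ s' ∈ G'.succ A (ST (G.CKN A q) (G'.CKN A q') σ) r',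
            ∃ s ∈ G.succ A σ r, R s s')) ∧
  (∀ q q', R q q' → G.label q = G'.label q') ∧
  (∀ q q', R q q' → ∀ i ∈ A, ∀ r', G'.indist i q' r' →
    ∃ r, G.indist i q r ∧ R r r') ∧
  (∀ q₁ q₂ q', R q₁ q' → R q₂ q' → G.CKN A q₁ = G.CKN A q₂)

/-- `R` is a bisimulation for `A` iff both `R` and its converse are `A`-simulations. -/
def IsBisimulation (G : iCGS Ag AP S Act) (G' : iCGS Ag AP S' Act') (A : Set Ag)
    (R : S → S' → Prop) : Prop :=
  G.IsSimulation G' A R ∧ G'.IsSimulation G A (fun q' q => R q q')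

end iCGS

/-!
An `A`-simulation comes with a strategy simulator `ST` that transports a uniform strategy,
restricted to a common-knowledge neighbourhood `C_A(q)`, to a uniform strategy on `C_A(q')`
for every `q R q'`, in such a way that every `σ'`-successor of a related state is matched by
a `σ`-successor. Injectivity modulo common knowledge and the epistemic back-condition make
these local strategies agree whenever two neighbourhoods `C_A(q')` meet, so they glue, together
with an arbitrary uniform strategy off their union, into one uniform strategy `σ'` on `G'`.
A run from `σ'` is then lifted back step by step, starting from a state given by the
back-condition at `q`.
-/

namespace iCGS

variable {Ag AP S S' Act Act' : Type} {G : iCGS Ag AP S Act} {G' : iCGS Ag AP S' Act'}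
  {A : Set Ag}

theorem Valid.indist_symm (hG : G.Valid) (i : Ag) {s t : S} (h : G.indist i s t) :
    G.indist i t s :=
  (hG.1 i).symm h

theorem ck_of_indist {i : Ag} (hi : i ∈ A) {s t : S} (h : G.indist i s t) : G.ck A s t :=
  Relation.ReflTransGen.single ⟨i, hi, h⟩

theorem mem_CKN_self (q : S) : q ∈ G.CKN A q :=
  Relation.ReflTransGen.refl

theorem ck_symm (hsymm : ∀ i {s t}, G.indist i s t → G.indist i t s) {s t : S}
    (h : G.ck A s t) : G.ck A t s := by
  induction h with
  | refl => exact Relation.ReflTransGen.refl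
  | tail _ hstep ih =>
    obtain ⟨i, hi, hind⟩ := hstep
    exact Relation.ReflTransGen.head ⟨i, hi, hsymm i hind⟩ ih

theorem CKN_eq_of_ck (hsymm : ∀ i {s t}, G.indist i s t → G.indist i t s) {s t : S}
    (h : G.ck A s t) : G.CKN A s = G.CKN A t := by
  ext u
  exact ⟨(ck_symm hsymm h).trans, h.trans⟩

theorem IsStrat.isPStrat {σ : Ag → S → Act} (hσ : G.IsStrat A σ) (Q : Set S) :
    G.IsPStrat A Q σ :=
  ⟨fun i hi s _ => hσ.1 i hi s trivial, fun i hi s _ t _ h => hσ.2 i hi s trivial t trivial h⟩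

theorem succ_congr {σ τ : Ag → S → Act} {s : S} (h : ∀ i ∈ A, σ i s = τ i s) :
    G.succ A σ s = G.succ A τ s := by
  ext t
  exact exists_congr fun a =>
    and_congr_left fun _ => forall₂_congr fun i hi => by rw [h i hi]

/-- Play, in each `∼ᵢ`-class, an action available at a chosen representative. -/
theorem Valid.exists_isStrat (hG : G.Valid) (A : Set Ag) : ∃ σ, G.IsStrat A σ := by
  let cls (i : Ag) : Setoid S := ⟨G.indist i, hG.1 i⟩
  choose act hact using fun i (c : Quotient (cls i)) => hG.2.1 i c.out
  refine ⟨fun i s => act i (Quotient.mk (cls i) s), fun i _ s _ => ?_,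
    fun i _ s _ t _ h => congrArg (act i) (Quotient.sound h)⟩
  rw [← hG.2.2.1 i _ _ (Quotient.mk_out (s := cls i) s)]
  exact hact i _

theorem Valid.exists_isStrat_extending (hG : G.Valid) {ι : Type} (a : ι → S)
    (τ : ι → Ag → S → Act) (hτ : ∀ x, G.IsPStrat A (G.CKN A (a x)) (τ x))
    (hcompat : ∀ x y, G.ck A (a x) (a y) → τ x = τ y) :
    ∃ σ, G.IsStrat A σ ∧ ∀ x, ∀ s ∈ G.CKN A (a x), ∀ i, σ i s = τ x i s := by
  classical
  obtain ⟨σ₀, hσ₀⟩ := hG.exists_isStrat A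
  let σ : Ag → S → Act := fun i s =>
    if h : ∃ x, G.ck A (a x) s then τ h.choose i s else σ₀ i s
  have hσ : ∀ x, ∀ s ∈ G.CKN A (a x), ∀ i, σ i s = τ x i s := by
    intro x s hs i
    have h : ∃ x, G.ck A (a x) s := ⟨x, hs⟩
    have hx : G.ck A (a h.choose) (a x) := h.choose_spec.trans (ck_symm hG.indist_symm hs)
    simp only [σ, dif_pos h, hcompat _ _ hx]
  refine ⟨σ, ⟨fun i hi s _ => ?_, fun i hi s _ t _ hst => ?_⟩, hσ⟩
  · by_cases h : ∃ x, G.ck A (a x) s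
    · rw [hσ _ s h.choose_spec]
      exact (hτ _).1 i hi s h.choose_spec
    · simp only [σ, dif_neg h]
      exact hσ₀.1 i hi s trivial
  · by_cases h : ∃ x, G.ck A (a x) s
    · obtain ⟨x, hs⟩ := h
      have ht : t ∈ G.CKN A (a x) := hs.trans (ck_of_indist hi hst)
      rw [hσ x s hs, hσ x t ht]
      exact (hτ x).2 i hi s hs t ht hst
    · have h' : ¬∃ x, G.ck A (a x) t := fun ⟨x, ht⟩ =>
        h ⟨x, ht.trans (ck_of_indist hi (hG.indist_symm i hst))⟩
      simp only [σ, dif_neg h, dif_neg h']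
      exact hσ₀.2 i hi s trivial t trivial hst

section Simulation

variable {R : S → S' → Prop}

theorem IsSimulation.exists_indist_of_indist (hsim : G.IsSimulation G' A R) {q : S}
    {q' r' : S'} (hq : R q q') {i : Ag} (hi : i ∈ A) (h : G'.indist i q' r') :
    ∃ r, G.indist i q r ∧ R r r' :=
  hsim.2.2.1 q q' hq i hi r' h

theorem IsSimulation.exists_ck_of_ck (hsim : G.IsSimulation G' A R) {p : S} {p' x' : S'}
    (hp : R p p') (h : G'.ck A p' x') : ∃ x, G.ck A p x ∧ R x x' := by
  induction h with
  | refl => exact ⟨p, Relation.ReflTransGen.refl, hp⟩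
  | tail _ hstep ih =>
    obtain ⟨x, hx, hRx⟩ := ih
    obtain ⟨i, hi, hind⟩ := hstep
    obtain ⟨y, hy, hRy⟩ := hsim.exists_indist_of_indist hRx hi hind
    exact ⟨y, hx.tail ⟨i, hi, hy⟩, hRy⟩

theorem IsSimulation.CKN_left_eq_of_ck
    (hsymm : ∀ i {s t}, G.indist i s t → G.indist i t s) (hsim : G.IsSimulation G' A R)
    {p₁ p₂ : S} {p₁' p₂' : S'} (h₁ : R p₁ p₁') (h₂ : R p₂ p₂')
    (h : G'.ck A p₁' p₂') :
    G.CKN A p₁ = G.CKN A p₂ := by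
  obtain ⟨x, hx, hRx⟩ := hsim.exists_ck_of_ck h₁ h
  exact (CKN_eq_of_ck hsymm hx).trans (hsim.2.2.2 x p₂ p₂' hRx h₂)

theorem IsSimulation.exists_isStrat_succ_back (hG : G.Valid) (hG' : G'.Valid)
    (hsim : G.IsSimulation G' A R) {σ : Ag → S → Act} (hσ : G.IsStrat A σ) :
    ∃ σ', G'.IsStrat A σ' ∧
      ∀ s s', R s s' → ∀ t' ∈ G'.succ A σ' s', ∃ t ∈ G.succ A σ s, R t t' := by
  obtain ⟨ST, hST⟩ := hsim.1
  let τ (x : {pp : S × S' // R pp.1 pp.2}) := ST (G.CKN A x.1.1) (G'.CKN A x.1.2) σ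
  have hτ : ∀ x, G'.IsPStrat A (G'.CKN A x.1.2) (τ x) := fun x =>
    (hST _ _ x.2).1 σ (hσ.isPStrat _)
  have hcompat : ∀ x y : {pp : S × S' // R pp.1 pp.2}, G'.ck A x.1.2 y.1.2 → τ x = τ y :=
    fun x y h => by
      simp only [τ, hsim.CKN_left_eq_of_ck hG.indist_symm x.2 y.2 h,
        CKN_eq_of_ck hG'.indist_symm h]
  obtain ⟨σ', hσ', hσ'τ⟩ := hG'.exists_isStrat_extending (fun x => x.1.2) τ hτ hcompat
  refine ⟨σ', hσ', fun s s' hR t' ht' => ?_⟩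
  rw [succ_congr fun i _ => hσ'τ ⟨(s, s'), hR⟩ s' (mem_CKN_self s') i] at ht'
  exact (hST s s' hR).2 s (mem_CKN_self s) s' (mem_CKN_self s') hR σ (hσ.isPStrat _) t' ht'

end Simulation

theorem exists_mem_outObj_of_succ_back {R : S → S' → Prop} {σ : Ag → S → Act}
    {σ' : Ag → S' → Act'}
    (hback : ∀ s s', R s s' → ∀ t' ∈ G'.succ A σ' s', ∃ t ∈ G.succ A σ s, R t t')
    {r : S} {r' : S'} (hr : R r r') {lam' : ℕ → S'} (hlam' : lam' ∈ G'.OutObj A σ' r') :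
    ∃ lam ∈ G.OutObj A σ r, ∀ j, R (lam j) (lam' j) := by
  have : Nonempty S := ⟨r⟩
  choose! next hnext hRnext using hback
  let lam : ℕ → S := fun j => Nat.rec r (fun j s => next s (lam' j) (lam' (j + 1))) j
  have hR : ∀ j, R (lam j) (lam' j) := by
    intro j
    induction j with
    | zero => exact hlam'.1 ▸ hr
    | succ j ih => exact hRnext _ _ ih _ (hlam'.2 j)
  exact ⟨lam, ⟨rfl, fun j => hnext _ _ (hR j) _ (hlam'.2 j)⟩, hR⟩

end iCGS

/-- strategy transfer along an `A`-simulation, subjective outcomes. -/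
theorem simulation_transfers_strategies_subj {Ag AP S S' Act Act' : Type}
    (G : iCGS Ag AP S Act) (G' : iCGS Ag AP S' Act')
    (hG : G.Valid) (hG' : G'.Valid) (A : Set Ag) (R : S → S' → Prop)
    (hsim : G.IsSimulation G' A R) (q : S) (q' : S') (hq : R q q')
    (σ : Ag → S → Act) (hσ : G.IsStrat A σ) :
    ∃ σ' : Ag → S' → Act', G'.IsStrat A σ' ∧
      ∀ lam' ∈ G'.OutSubj A σ' q', ∃ lam ∈ G.OutSubj A σ q,
        ∀ i, R (lam i) (lam' i) := by
  obtain ⟨σ', hσ', hback⟩ := hsim.exists_isStrat_succ_back hG hG' hσ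
  refine ⟨σ', hσ', fun lam' ⟨i, hi, r', hqr', hlam'⟩ => ?_⟩
  obtain ⟨r, hqr, hr⟩ := hsim.exists_indist_of_indist hq hi hqr'
  obtain ⟨lam, hlam, hR⟩ := iCGS.exists_mem_outObj_of_succ_back hback hr hlam'
  exact ⟨lam, ⟨i, hi, r, hqr, hlam⟩, hR⟩
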